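/- arXiv:1611.04274 — 2 statements merged into one kernel-verified Lean document; each statement's English description precedes it below -/
import Mathlib

section
/- (Lemma 2.6(1),(2)) In the generalized matrix ring setting, let φ : R → R be an additive map satisfying condition (P), and define ψ(U) = φ(U) − φ(1)·U + T·U − U·T where T = e·φ(e)·f + f·φ(f)·e and f = 1 − e. Then for every a ∈ R with a = eae and every m ∈ R with m = emf, ψ(a∘m) = ψ(a)∘m + a∘ψ(m); and for every b ∈ R with b = fbf and every n ∈ R with n = fne, ψ(b∘n) = ψ(b)∘n + b∘ψ(n). Here x∘y = xy + yx. -/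
/-!
Write `f = 1 - e`. Condition (P) for the orthogonal pair `(e, f)` makes `φ 1` commute with `e` and,
by 2-torsion freeness, kills the corners `e φ(f) e` and `f φ(e) f`; hence `ψ e = ψ f = 0`.
For an off-diagonal `x = e x f` the pair `(e - x, x + f)` is orthogonal as well, and (P) for it
shows that `φ 1` commutes with `x`. Whenever `φ 1` commutes with `V`, the map `ψ` inherits (P) on
the orthogonal pair `(U, V)`; the pair `(e - x, x + f)` then shows that `ψ x` is off-diagonal.
For `a = e a e` and `m = e m f` the claim follows from (P) for `ψ` on the pairs
`(a - a m, m + f)`, `(a, f)` and `(a m, m)`. The second claim is the first one for `1 - e`.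

Identities between Peirce components are checked by substituting `f = 1 - e`, `x = e y f`
(or `e y e`) and normalizing with `e * e = e`.
-/

section

variable {R : Type*} [Ring R]

-- Condition (P).
def JordanDerivableOnOrthogonal (φ : R →+ R) : Prop :=
  ∀ U V : R, U * V = 0 → V * U = 0 → φ U * V + V * φ U + U * φ V + φ V * U = 0

-- The map `ψ` of the statement for an arbitrary `T`; only `ψ e = ψ f = 0` depends on `T`.
def correctedMap (φ : R →+ R) (T : R) : R →+ R :=
  φ - AddMonoidHom.mulLeft (φ 1) + (AddMonoidHom.mulLeft T - AddMonoidHom.mulRight T)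

@[simp]
lemma correctedMap_apply (φ : R →+ R) (T U : R) :
    correctedMap φ T U = φ U - φ 1 * U + (T * U - U * T) :=
  rfl

section Peirce

variable {e f : R}

lemma map_one_eq_add_of_pair (φ : R →+ R) (hef : CompleteOrthogonalIdempotents ![e, f]) :
    φ 1 = φ e + φ f := by
  rw [← map_add, (CompleteOrthogonalIdempotents.pair_iff'ₛ.mp hef).2.2]

lemma orthogonal_of_offDiag (hef : CompleteOrthogonalIdempotents ![e, f]) {x : R}
    (hx : x = e * x * f) :
    (e - x) * (x + f) = 0 ∧ (x + f) * (e - x) = 0 ∧ x * x = 0 := by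
  obtain ⟨he, rfl⟩ := CompleteOrthogonalIdempotents.pair_iff.mp hef
  obtain ⟨y, hy⟩ : ∃ y, x = e * y * (1 - e) := ⟨x, hx⟩
  refine ⟨?_, ?_, ?_⟩ <;>
    simp only [hy, mul_sub, sub_mul, mul_add, add_mul, mul_one, one_mul, mul_assoc, he.eq,
      he.mul_self_mul] <;>
    abel

lemma correctedMap_idempotent_eq_zero {φ : R →+ R} (hef : CompleteOrthogonalIdempotents ![e, f])
    (h1 : e * φ f * e = 0) (h2 : f * φ e * f = 0) :
    correctedMap φ (e * φ e * f + f * φ f * e) e = 0 := by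
  rw [correctedMap_apply, map_one_eq_add_of_pair φ hef]
  obtain ⟨he, rfl⟩ := CompleteOrthogonalIdempotents.pair_iff.mp hef
  linear_combination (norm := (simp only [mul_sub, sub_mul, mul_add, add_mul, mul_one, one_mul,
      mul_assoc, he.eq, he.mul_self_mul]; abel)) h2 - h1

end Peirce

namespace JordanDerivableOnOrthogonal

variable {φ : R →+ R}

lemma correctedMap_orthogonal (hP : JordanDerivableOnOrthogonal φ) (T : R) {U V : R}
    (hUV : U * V = 0) (hVU : V * U = 0) (hV : Commute (φ 1) V) :
    correctedMap φ T U * V + V * correctedMap φ T U +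
      (U * correctedMap φ T V + correctedMap φ T V * U) = 0 := by
  simp only [correctedMap_apply]
  linear_combination (norm := noncomm_ring) hP U V hUV hVU - φ 1 * hUV - 2 * φ 1 * hVU -
    hUV * φ 1 - U * hV.eq + hV.eq * U + T * hUV - hUV * T + T * hVU - hVU * T

variable {e f : R}

lemma corner_map_compl_eq_zero (hP : JordanDerivableOnOrthogonal φ)
    (hef : CompleteOrthogonalIdempotents ![e, f])
    (h2 : ∀ x : R, e * x * e + e * x * e = 0 → e * x * e = 0) :
    e * φ f * e = 0 := by
  obtain ⟨he, rfl⟩ := CompleteOrthogonalIdempotents.pair_iff.mp hef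
  apply h2
  linear_combination (norm := (simp only [mul_sub, sub_mul, mul_add, add_mul, mul_one, one_mul,
      mul_zero, zero_mul, mul_assoc, he.eq, he.mul_self_mul]; abel))
    e * hP e (1 - e) he.mul_one_sub_self he.one_sub_mul_self * e

lemma commute_map_one (hP : JordanDerivableOnOrthogonal φ)
    (hef : CompleteOrthogonalIdempotents ![e, f]) : Commute e (φ 1) := by
  rw [Commute, SemiconjBy, map_one_eq_add_of_pair φ hef]
  obtain ⟨he, rfl⟩ := CompleteOrthogonalIdempotents.pair_iff.mp hef
  have hPef := hP e (1 - e) he.mul_one_sub_self he.one_sub_mul_self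
  linear_combination (norm := (simp only [mul_sub, sub_mul, mul_add, add_mul, mul_one, one_mul,
      mul_zero, zero_mul, mul_assoc, he.eq, he.mul_self_mul]; abel))
    e * hPef * (1 - e) - (1 - e) * hPef * e

lemma commute_map_one_compl (hP : JordanDerivableOnOrthogonal φ)
    (hef : CompleteOrthogonalIdempotents ![e, f]) : Commute (φ 1) f := by
  obtain ⟨-, rfl⟩ := CompleteOrthogonalIdempotents.pair_iff.mp hef
  exact (Commute.one_right _).sub_right (hP.commute_map_one hef).symm

lemma commute_map_one_of_offDiag (hP : JordanDerivableOnOrthogonal φ)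
    (hef : CompleteOrthogonalIdempotents ![e, f]) (h1 : e * φ f * e = 0) (h2 : f * φ e * f = 0)
    {x : R} (hx : x = e * x * f) : Commute (φ 1) x := by
  have hc := hP.commute_map_one hef
  obtain ⟨hUV, hVU, hxx⟩ := orthogonal_of_offDiag hef hx
  have hPx := hP (e - x) (x + f) hUV hVU
  rw [map_sub, map_add] at hPx
  rw [Commute, SemiconjBy, map_one_eq_add_of_pair φ hef] at hc ⊢
  obtain ⟨he, rfl⟩ := CompleteOrthogonalIdempotents.pair_iff.mp hef
  obtain ⟨y, hy⟩ : ∃ y, x = e * y * (1 - e) := ⟨x, hx⟩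
  have hcorner : e * φ e * x = x * φ (1 - e) * (1 - e) := by
    linear_combination (norm := (simp only [hy, mul_sub, sub_mul, mul_add, add_mul, mul_one,
        one_mul, mul_zero, zero_mul, mul_assoc, he.eq, he.mul_self_mul]; abel_nf))
      e * (hPx - hP e (1 - e) he.mul_one_sub_self he.one_sub_mul_self + hP x x hxx hxx) *
        (1 - e) - x * h2 + h1 * x
  linear_combination (norm := (simp only [hy, mul_sub, sub_mul, mul_add, add_mul, mul_one, one_mul,
      mul_zero, zero_mul, mul_assoc, he.mul_self_mul]; abel_nf))
    hcorner + h1 * x - x * h2 - hc * x + x * hc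

lemma correctedMap_offDiag_of_offDiag (hP : JordanDerivableOnOrthogonal φ)
    (hef : CompleteOrthogonalIdempotents ![e, f]) (h1 : e * φ f * e = 0) (h2 : f * φ e * f = 0)
    (h2e : ∀ x : R, e * x * e + e * x * e = 0 → e * x * e = 0)
    (h2f : ∀ x : R, f * x * f + f * x * f = 0 → f * x * f = 0)
    {T : R} (hψe : correctedMap φ T e = 0) (hψf : correctedMap φ T f = 0)
    {x : R} (hx : x = e * x * f) :
    correctedMap φ T x * f + f * correctedMap φ T x = correctedMap φ T x := by
  have hcx := hP.commute_map_one_of_offDiag hef h1 h2 hx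
  obtain ⟨hUV, hVU, hxx⟩ := orthogonal_of_offDiag hef hx
  have hψUV := hP.correctedMap_orthogonal T hUV hVU (hcx.add_right (hP.commute_map_one_compl hef))
  rw [map_sub, map_add, hψe, hψf] at hψUV
  have hsym : e * correctedMap φ T x + correctedMap φ T x * e =
      f * correctedMap φ T x + correctedMap φ T x * f := by
    linear_combination (norm := noncomm_ring) hψUV + hP.correctedMap_orthogonal T hxx hxx hcx
  obtain ⟨he, rfl⟩ := CompleteOrthogonalIdempotents.pair_iff.mp hef
  have hee : e * correctedMap φ T x * e = 0 := h2e _ (by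
    linear_combination (norm := (simp only [mul_sub, sub_mul, mul_add, add_mul, mul_one, one_mul,
      mul_assoc, he.eq, he.mul_self_mul]; abel)) e * hsym * e)
  have hff : (1 - e) * correctedMap φ T x * (1 - e) = 0 := h2f _ (by
    linear_combination (norm := (simp only [mul_sub, sub_mul, mul_add, add_mul, mul_one, one_mul,
      mul_assoc, he.eq, he.mul_self_mul]; abel)) -((1 - e) * hsym * (1 - e)))
  linear_combination (norm := noncomm_ring) hff - hee

lemma correctedMap_jordan_diag_offDiag (hP : JordanDerivableOnOrthogonal φ)
    (hef : CompleteOrthogonalIdempotents ![e, f]) (h1 : e * φ f * e = 0) (h2 : f * φ e * f = 0)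
    (h2e : ∀ x : R, e * x * e + e * x * e = 0 → e * x * e = 0)
    (h2f : ∀ x : R, f * x * f + f * x * f = 0 → f * x * f = 0)
    {T : R} (hψe : correctedMap φ T e = 0) (hψf : correctedMap φ T f = 0)
    {a m : R} (ha : a = e * a * e) (hm : m = e * m * f) :
    correctedMap φ T (a * m + m * a) =
      (correctedMap φ T a * m + m * correctedMap φ T a) +
        (a * correctedMap φ T m + correctedMap φ T m * a) := by
  have hcm := hP.commute_map_one_of_offDiag hef h1 h2 hm
  have hcf := hP.commute_map_one_compl hef
  obtain ⟨he, hf⟩ := CompleteOrthogonalIdempotents.pair_iff.mp hef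
  obtain ⟨b, hb⟩ : ∃ b, a = e * b * e := ⟨a, ha⟩
  obtain ⟨n, hn⟩ : ∃ n, m = e * n * (1 - e) := ⟨m, hf ▸ hm⟩
  obtain ⟨ham, hma, hUV, hVU, haf, hfa, hamm, hmam⟩ :
      a * m = e * (a * m) * f ∧ m * a = 0 ∧ (a - a * m) * (m + f) = 0 ∧
        (m + f) * (a - a * m) = 0 ∧ a * f = 0 ∧ f * a = 0 ∧ a * m * m = 0 ∧ m * (a * m) = 0 := by
    refine ⟨?_, ?_, ?_, ?_, ?_, ?_, ?_, ?_⟩ <;>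
      simp only [hb, hn, hf, mul_sub, sub_mul, mul_add, add_mul, mul_one, one_mul, mul_assoc,
        he.eq, he.mul_self_mul] <;>
      abel
  have hψUV := hP.correctedMap_orthogonal T hUV hVU (hcm.add_right hcf)
  rw [map_sub, map_add, hψf] at hψUV
  have hψaf := hP.correctedMap_orthogonal T haf hfa hcf
  rw [hψf] at hψaf
  rw [hma, add_zero]
  linear_combination (norm := noncomm_ring) hψaf - hψUV -
    hP.correctedMap_orthogonal T hamm hmam hcm -
    hP.correctedMap_offDiag_of_offDiag hef h1 h2 h2e h2f hψe hψf ham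

end JordanDerivableOnOrthogonal

end

theorem psi_jordan_on_diag_offdiag_same_row_general
    {R : Type*} [Ring R] (e : R) (he : e * e = e)
    (h2A : ∀ x : R, e * x * e + e * x * e = 0 → e * x * e = 0)
    (h2B : ∀ x : R, (1 - e) * x * (1 - e) + (1 - e) * x * (1 - e) = 0 →
      (1 - e) * x * (1 - e) = 0)
    (φ : R →+ R)
    (hP : ∀ U V : R, U * V = 0 → V * U = 0 →
      φ U * V + V * φ U + U * φ V + φ V * U = 0)
    (ψ : R → R)
    (hψ : ∀ U : R, ψ U = φ U - φ 1 * U +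
      ((e * φ e * (1 - e) + (1 - e) * φ (1 - e) * e) * U -
        U * (e * φ e * (1 - e) + (1 - e) * φ (1 - e) * e))) :
    (∀ a m : R, a = e * a * e → m = e * m * (1 - e) →
      ψ (a * m + m * a) = (ψ a * m + m * ψ a) + (a * ψ m + ψ m * a)) ∧
    (∀ b n : R, b = (1 - e) * b * (1 - e) → n = (1 - e) * n * e →
      ψ (b * n + n * b) = (ψ b * n + n * ψ b) + (b * ψ n + ψ n * b)) := by
  obtain rfl : ψ = correctedMap φ (e * φ e * (1 - e) + (1 - e) * φ (1 - e) * e) := funext hψ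
  have hP : JordanDerivableOnOrthogonal φ := hP
  have hpair := CompleteOrthogonalIdempotents.of_isIdempotentElem he
  have hpair' : CompleteOrthogonalIdempotents ![1 - e, e] :=
    CompleteOrthogonalIdempotents.pair_iff.mpr ⟨IsIdempotentElem.one_sub he,
      (sub_sub_cancel 1 e).symm⟩
  have h1 := hP.corner_map_compl_eq_zero hpair h2A
  have h2 := hP.corner_map_compl_eq_zero hpair' h2B
  have hψe := correctedMap_idempotent_eq_zero hpair h1 h2
  have hψf := correctedMap_idempotent_eq_zero hpair' h2 h1
  rw [add_comm] at hψf
  exact ⟨fun a m ↦ hP.correctedMap_jordan_diag_offDiag hpair h1 h2 h2A h2B hψe hψf,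
    fun b n ↦ hP.correctedMap_jordan_diag_offDiag hpair' h2 h1 h2B h2A hψf hψe⟩

theorem psi_jordan_on_diag_offdiag_same_row
    {R : Type*} [Ring R] (e : R) (he : e * e = e)
    (h2A : ∀ x : R, e * x * e + e * x * e = 0 → e * x * e = 0)
    (h2B : ∀ x : R, (1 - e) * x * (1 - e) + (1 - e) * x * (1 - e) = 0 →
      (1 - e) * x * (1 - e) = 0)
    (hlf : ∀ a : R, a = e * a * e → (∀ x : R, a * (e * x * (1 - e)) = 0) → a = 0)
    (hrf : ∀ b : R, b = (1 - e) * b * (1 - e) → (∀ x : R, (e * x * (1 - e)) * b = 0) → b = 0)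
    (φ : R →+ R)
    (hP : ∀ U V : R, U * V = 0 → V * U = 0 →
      φ U * V + V * φ U + U * φ V + φ V * U = 0)
    (ψ : R → R)
    (hψ : ∀ U : R, ψ U = φ U - φ 1 * U +
      ((e * φ e * (1 - e) + (1 - e) * φ (1 - e) * e) * U -
        U * (e * φ e * (1 - e) + (1 - e) * φ (1 - e) * e))) :
    (∀ a m : R, a = e * a * e → m = e * m * (1 - e) →
      ψ (a * m + m * a) = (ψ a * m + m * ψ a) + (a * ψ m + ψ m * a)) ∧
    (∀ b n : R, b = (1 - e) * b * (1 - e) → n = (1 - e) * n * e →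
      ψ (b * n + n * b) = (ψ b * n + n * ψ b) + (b * ψ n + ψ n * b)) :=
  psi_jordan_on_diag_offdiag_same_row_general e he h2A h2B φ hP ψ hψ
end

section
/- (Lemma 2.6(7),(8)) In the generalized matrix ring setting, let φ : R → R be an additive map satisfying condition (P), and define ψ(U) = φ(U) − φ(1)·U + T·U − U·T where T = e·φ(e)·f + f·φ(f)·e and f = 1 − e. Then for every m ∈ R with m = emf and every n ∈ R with n = fne, one has ψ(m∘n) = ψ(m)∘n + m∘ψ(n) and ψ(n∘m) = ψ(n)∘m + n∘ψ(m); indeed ψ(mn) = ψ(m)n + mψ(n) and ψ(nm) = ψ(n)m + nψ(m). Here x∘y = xy + yx. -/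
/-!
Adding an inner derivation `[T, ·]` to `φ` preserves (P), and for `T = eφ(e)f + fφ(f)e` it
moves `φ(e)` into `eRe` and `φ(f)` into `fRf`; for this corrected map `χ` one has
`ψ(x) = χ(x) - χ(1)x`.

If `q` is idempotent, `X² = 0` and `qX + Xq = X`, then `q ± X` are idempotents with complements
`1 - q ∓ X`, and comparing (P) for these pairs with (P) for `(q, 1 - q)` shows that
`D = χ(X) ∘ (1 - q) + X ∘ χ(1 - q) - χ(q) ∘ X - q ∘ χ(X)` equals `χ(X) ∘ X + X ∘ χ(X)`
and satisfies `2D = 0`. For `q = e` and `X = m` the Peirce corners of `D` show that `χ(m)`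
lies in `eRf + fRe`, that `mχ(m)e = 0` (hence, by polarization, `mχ(m')e = -m'χ(m)e`) and
that `χ(e)m = mχ(f)`. For `q = e + m` and the conjugate `X = (1 - m) n (1 + m)` of `n`, the
`eRe`-corner of `2D` is, modulo these relations, four times `χ(mn) - χ(m)n - mχ(n) + mχ(1)n`,
which therefore vanishes. Exchanging `e` and `1 - e` gives the identity for `nm`.
-/

section

variable {R : Type*} [Ring R]

def jordanLeibniz (φ : R →+ R) (U V : R) : R := φ U * V + V * φ U + U * φ V + φ V * U

def JordanDerivableAtOrthogonal (φ : R →+ R) : Prop :=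
  ∀ U V : R, U * V = 0 → V * U = 0 → jordanLeibniz φ U V = 0

def TwoTorsionFreeCorner (e : R) : Prop :=
  ∀ x : R, e * x * e + e * x * e = 0 → e * x * e = 0

def peirceDiagonalize (φ : R →+ R) (e f : R) : R →+ R :=
  φ + (AddMonoidHom.mulLeft (e * φ e * f + f * φ f * e) -
    AddMonoidHom.mulRight (e * φ e * f + f * φ f * e))

theorem peirceDiagonalize_apply (φ : R →+ R) (e f x : R) :
    peirceDiagonalize φ e f x =
      φ x + ((e * φ e * f + f * φ f * e) * x - x * (e * φ e * f + f * φ f * e)) := rfl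

theorem peirceDiagonalize_comm (φ : R →+ R) (e f : R) :
    peirceDiagonalize φ e f = peirceDiagonalize φ f e := by
  rw [peirceDiagonalize, peirceDiagonalize, add_comm (e * φ e * f)]

-- Rewrite rules normalising right-associated words in `e` and `f`, for `noncomm_ring`.
theorem IsIdempotentElem.peirce_mul_rules {e f : R} (he : IsIdempotentElem e) (hef : e + f = 1) :
    (e * e = e ∧ f * f = f ∧ e * f = 0 ∧ f * e = 0) ∧
      ∀ w : R, e * (e * w) = e * w ∧ f * (f * w) = f * w ∧ e * (f * w) = 0 ∧ f * (e * w) = 0 := by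
  obtain rfl := eq_sub_of_add_eq' hef
  refine ⟨⟨he.eq, he.one_sub.eq, he.mul_one_sub_self, he.one_sub_mul_self⟩, fun w => ?_⟩
  simp only [← mul_assoc, he.eq, he.one_sub.eq, he.mul_one_sub_self, he.one_sub_mul_self, zero_mul,
    and_self]

theorem TwoTorsionFreeCorner.eq_zero_of_four_mul {e z : R} (h2 : TwoTorsionFreeCorner e)
    (hz : z = e * z * e) (h : 4 * z = 0) : z = 0 := by
  have h2z := h2 (z + z)
    (by rw [mul_add, add_mul, ← hz]; linear_combination (norm := noncomm_ring) h)
  rw [mul_add, add_mul, ← hz] at h2z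
  rw [hz] at h2z ⊢
  exact h2 z h2z

theorem mul_mem_corner {e f g a b : R} (he : IsIdempotentElem e) (hf : IsIdempotentElem f)
    (ha : a = e * a * g) (hb : b = g * b * f) : a * b = e * (a * b) * f := by
  rw [ha, hb]
  simp only [mul_assoc, he.mul_self_mul, hf.eq]

namespace JordanDerivableAtOrthogonal

variable {φ : R →+ R} {e f : R}

theorem add_mulLeft_sub_mulRight (hφ : JordanDerivableAtOrthogonal φ) (T : R) :
    JordanDerivableAtOrthogonal (φ + (AddMonoidHom.mulLeft T - AddMonoidHom.mulRight T)) := by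
  intro U V hUV hVU
  have h := hφ U V hUV hVU
  simp only [jordanLeibniz, AddMonoidHom.add_apply, AddMonoidHom.sub_apply,
    AddMonoidHom.coe_mulLeft, AddMonoidHom.coe_mulRight] at h ⊢
  linear_combination (norm := noncomm_ring) h + T * hUV + T * hVU - hUV * T - hVU * T

theorem jordanLeibniz_eq_zero (hφ : JordanDerivableAtOrthogonal φ) {p q : R}
    (hp : IsIdempotentElem p) (hpq : p + q = 1) : jordanLeibniz φ p q = 0 := by
  obtain rfl := eq_sub_of_add_eq' hpq
  exact hφ _ _ hp.mul_one_sub_self hp.one_sub_mul_self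

theorem peirceDiagonalize_apply_left (hφ : JordanDerivableAtOrthogonal φ)
    (he : IsIdempotentElem e) (hef : e + f = 1) (h2f : TwoTorsionFreeCorner f) :
    peirceDiagonalize φ e f e = e * peirceDiagonalize φ e f e * e := by
  have hJ := hφ.jordanLeibniz_eq_zero he hef
  unfold jordanLeibniz at hJ
  have hff := h2f (φ e)
    (by linear_combination (norm := noncomm_ring [he.peirce_mul_rules hef]) f * hJ * f)
  have hφe : φ e = (e + f) * φ e * (e + f) := by rw [hef, one_mul, mul_one]
  simp only [peirceDiagonalize_apply]
  linear_combination (norm := noncomm_ring [he.peirce_mul_rules hef]) hφe + f * hJ * e + hff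

theorem jordanLeibniz_tangent (hφ : JordanDerivableAtOrthogonal φ) {q q' X : R}
    (hq : IsIdempotentElem q) (hqq' : q + q' = 1) (hX : X * X = 0) (hqX : q * X + X * q = X) :
    jordanLeibniz φ X q' - jordanLeibniz φ q X = jordanLeibniz φ X X ∧
      jordanLeibniz φ X q' - jordanLeibniz φ q X +
        (jordanLeibniz φ X q' - jordanLeibniz φ q X) = 0 := by
  have hplus : IsIdempotentElem (q + X) := by
    rw [IsIdempotentElem, add_mul, mul_add, mul_add, hq.eq, hX]
    linear_combination (norm := noncomm_ring) hqX
  have hminus : IsIdempotentElem (q - X) := by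
    rw [IsIdempotentElem, sub_mul, mul_sub, mul_sub, hq.eq, hX]
    linear_combination (norm := noncomm_ring) -hqX
  have hJ := hφ.jordanLeibniz_eq_zero hq hqq'
  have hJp := hφ.jordanLeibniz_eq_zero hplus (q := q' - X) (by rw [← hqq']; abel)
  have hJm := hφ.jordanLeibniz_eq_zero hminus (q := q' + X) (by rw [← hqq']; abel)
  simp only [jordanLeibniz, map_add, map_sub] at hJ hJp hJm ⊢
  constructor
  · linear_combination (norm := noncomm_ring) hJp - hJ
  · linear_combination (norm := noncomm_ring) hJp - hJm

theorem apply_eq_of_mem_corner (hφ : JordanDerivableAtOrthogonal φ)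
    (he : IsIdempotentElem e) (hef : e + f = 1)
    (h2f : TwoTorsionFreeCorner f) (hb : φ f = f * φ f * f)
    {x : R} (hx : x = e * x * e) : φ x = e * φ x * e := by
  obtain ⟨y, rfl⟩ : ∃ y, x = e * y * e := ⟨x, hx⟩
  have hJ := hφ (e * y * e) f (by noncomm_ring [he.peirce_mul_rules hef])
    (by noncomm_ring [he.peirce_mul_rules hef])
  rw [jordanLeibniz, hb] at hJ
  have hff := h2f (φ (e * y * e))
    (by linear_combination (norm := noncomm_ring [he.peirce_mul_rules hef]) f * hJ * f)
  have hφx : φ (e * y * e) = (e + f) * φ (e * y * e) * (e + f) := by rw [hef, one_mul, mul_one]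
  linear_combination (norm := noncomm_ring [he.peirce_mul_rules hef])
    hφx + f * hJ * e + e * hJ * f + hff

theorem apply_eq_of_mem_offDiag (hφ : JordanDerivableAtOrthogonal φ)
    (he : IsIdempotentElem e) (hef : e + f = 1)
    (h2e : TwoTorsionFreeCorner e) (h2f : TwoTorsionFreeCorner f)
    (ha : φ e = e * φ e * e) (hb : φ f = f * φ f * f)
    {m : R} (hm : m = e * m * f) : φ m = e * φ m * f + f * φ m * e := by
  obtain ⟨x, rfl⟩ : ∃ x, m = e * x * f := ⟨m, hm⟩
  obtain ⟨-, hD⟩ := hφ.jordanLeibniz_tangent he hef (X := e * x * f)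
    (by noncomm_ring [he.peirce_mul_rules hef]) (by noncomm_ring [he.peirce_mul_rules hef])
  rw [jordanLeibniz, jordanLeibniz, ha, hb] at hD
  have hee := h2e.eq_zero_of_four_mul (z := e * φ (e * x * f) * e)
    (by noncomm_ring [he.peirce_mul_rules hef])
    (by linear_combination (norm := noncomm_ring [he.peirce_mul_rules hef]) -(e * hD * e))
  have hff := h2f.eq_zero_of_four_mul (z := f * φ (e * x * f) * f)
    (by noncomm_ring [he.peirce_mul_rules hef])
    (by linear_combination (norm := noncomm_ring [he.peirce_mul_rules hef]) f * hD * f)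
  have hφm : φ (e * x * f) = (e + f) * φ (e * x * f) * (e + f) := by rw [hef, one_mul, mul_one]
  linear_combination (norm := noncomm_ring [he.peirce_mul_rules hef]) hφm + hee + hff

theorem mul_apply_mul_eq_zero (hφ : JordanDerivableAtOrthogonal φ)
    (he : IsIdempotentElem e) (hef : e + f = 1) (h2e : TwoTorsionFreeCorner e)
    {m : R} (hm : m = e * m * f) : m * φ m * e = 0 := by
  obtain ⟨x, rfl⟩ : ∃ x, m = e * x * f := ⟨m, hm⟩
  obtain ⟨hD, hD2⟩ := hφ.jordanLeibniz_tangent he hef (X := e * x * f)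
    (by noncomm_ring [he.peirce_mul_rules hef]) (by noncomm_ring [he.peirce_mul_rules hef])
  rw [hD, jordanLeibniz] at hD2
  exact h2e.eq_zero_of_four_mul (by noncomm_ring [he.peirce_mul_rules hef])
    (by linear_combination (norm := noncomm_ring [he.peirce_mul_rules hef]) e * hD2 * e)

theorem mul_apply_mul_add_mul_apply_mul_eq_zero (hφ : JordanDerivableAtOrthogonal φ)
    (he : IsIdempotentElem e) (hef : e + f = 1) (h2e : TwoTorsionFreeCorner e)
    {m m' : R} (hm : m = e * m * f) (hm' : m' = e * m' * f) :
    m * φ m' * e + m' * φ m * e = 0 := by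
  have hsum : m + m' = e * (m + m') * f := by rw [mul_add, add_mul, ← hm, ← hm']
  have h := hφ.mul_apply_mul_eq_zero he hef h2e hsum
  rw [map_add] at h
  linear_combination (norm := noncomm_ring) h - hφ.mul_apply_mul_eq_zero he hef h2e hm -
    hφ.mul_apply_mul_eq_zero he hef h2e hm'

theorem apply_mul_eq_mul_apply (hφ : JordanDerivableAtOrthogonal φ)
    (he : IsIdempotentElem e) (hef : e + f = 1)
    (h2e : TwoTorsionFreeCorner e) (h2f : TwoTorsionFreeCorner f)
    (ha : φ e = e * φ e * e) (hb : φ f = f * φ f * f)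
    {m : R} (hm : m = e * m * f) : φ e * m = m * φ f := by
  have hφm := hφ.apply_eq_of_mem_offDiag he hef h2e h2f ha hb hm
  obtain ⟨x, rfl⟩ : ∃ x, m = e * x * f := ⟨m, hm⟩
  obtain ⟨hD, -⟩ := hφ.jordanLeibniz_tangent he hef (X := e * x * f)
    (by noncomm_ring [he.peirce_mul_rules hef]) (by noncomm_ring [he.peirce_mul_rules hef])
  rw [jordanLeibniz, jordanLeibniz, jordanLeibniz, ha, hb, hφm] at hD
  rw [ha, hb]
  linear_combination (norm := noncomm_ring [he.peirce_mul_rules hef]) -(e * hD * f)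

theorem apply_mul_of_mem_offDiag (hφ : JordanDerivableAtOrthogonal φ)
    (he : IsIdempotentElem e) (hef : e + f = 1)
    (h2e : TwoTorsionFreeCorner e) (h2f : TwoTorsionFreeCorner f)
    (ha : φ e = e * φ e * e) (hb : φ f = f * φ f * f)
    {m n : R} (hm : m = e * m * f) (hn : n = f * n * e) :
    φ (m * n) = φ m * n + m * φ n - m * φ 1 * n := by
  have hf : IsIdempotentElem f := eq_sub_of_add_eq' hef ▸ he.one_sub
  have hfe : f + e = 1 := by rw [add_comm, hef]
  have hmn : m * n = e * (m * n) * e := mul_mem_corner he he hm hn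
  have hnm : n * m = f * (n * m) * f := mul_mem_corner hf hf hn hm
  have hmnm : m * n * m = e * (m * n * m) * f := mul_mem_corner he hf hmn hm
  have hpolar := hφ.mul_apply_mul_add_mul_apply_mul_eq_zero he hef h2e hm hmnm
  have hm_comm := hφ.apply_mul_eq_mul_apply he hef h2e h2f ha hb hm
  have hn_comm := hφ.apply_mul_eq_mul_apply hf hfe h2f h2e hb ha hn
  have hφm := hφ.apply_eq_of_mem_offDiag he hef h2e h2f ha hb hm
  have hφn := hφ.apply_eq_of_mem_offDiag hf hfe h2f h2e hb ha hn
  have hφmnm := hφ.apply_eq_of_mem_offDiag he hef h2e h2f ha hb hmnm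
  have hφmn := hφ.apply_eq_of_mem_corner he hef h2f hb hmn
  have hφnm := hφ.apply_eq_of_mem_corner hf hfe h2e ha hnm
  obtain ⟨x, rfl⟩ : ∃ x, m = e * x * f := ⟨m, hm⟩
  obtain ⟨y, rfl⟩ : ∃ y, n = f * y * e := ⟨n, hn⟩
  -- `e + m ± X = (1 - m) (e ± n) (1 + m)` are idempotents
  obtain ⟨-, hD⟩ := hφ.jordanLeibniz_tangent (q := e + e * x * f) (q' := f - e * x * f)
    (X := f * y * e + f * y * e * (e * x * f) - e * x * f * (f * y * e) -
      e * x * f * (f * y * e) * (e * x * f))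
    (by rw [IsIdempotentElem]; noncomm_ring [he.peirce_mul_rules hef]) (by rw [← hef]; abel)
    (by noncomm_ring [he.peirce_mul_rules hef]) (by noncomm_ring [he.peirce_mul_rules hef])
  simp only [jordanLeibniz, map_add, map_sub] at hD
  rw [ha, hb, hφm, hφn, hφmnm, hφmn, hφnm] at hD
  rw [ha, hb] at hm_comm hn_comm
  rw [hφm, hφmnm] at hpolar
  have hφ1 : φ 1 = φ e + φ f := by rw [← map_add, hef]
  rw [← sub_eq_zero, hφ1, ha, hb, hφm, hφn, hφmn]
  refine h2e.eq_zero_of_four_mul (by noncomm_ring [he.peirce_mul_rules hef]) ?_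
  linear_combination (norm := noncomm_ring [he.peirce_mul_rules hef])
    e * hD * e - 4 * hpolar - 2 * hm_comm * (f * y * e) + 2 * (e * x * f) * hn_comm

end JordanDerivableAtOrthogonal

end

theorem psi_jordan_on_offdiagonal_corners_general
    {R : Type*} [Ring R] (e : R) (he : e * e = e)
    (h2A : ∀ x : R, e * x * e + e * x * e = 0 → e * x * e = 0)
    (h2B : ∀ x : R, (1 - e) * x * (1 - e) + (1 - e) * x * (1 - e) = 0 →
      (1 - e) * x * (1 - e) = 0)
    (φ : R →+ R)
    (hP : ∀ U V : R, U * V = 0 → V * U = 0 →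
      φ U * V + V * φ U + U * φ V + φ V * U = 0)
    (ψ : R → R)
    (hψ : ∀ U : R, ψ U = φ U - φ 1 * U +
      ((e * φ e * (1 - e) + (1 - e) * φ (1 - e) * e) * U -
        U * (e * φ e * (1 - e) + (1 - e) * φ (1 - e) * e))) :
    ∀ m n : R, m = e * m * (1 - e) → n = (1 - e) * n * e →
      (ψ (m * n) = ψ m * n + m * ψ n) ∧
      (ψ (n * m) = ψ n * m + n * ψ m) ∧
      (ψ (m * n + n * m) = (ψ m * n + n * ψ m) + (m * ψ n + ψ n * m)) ∧
      (ψ (n * m + m * n) = (ψ n * m + m * ψ n) + (n * ψ m + ψ m * n)) := by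
  intro m n hm hn
  have he : IsIdempotentElem e := he
  have hef : e + (1 - e) = 1 := add_sub_cancel e 1
  have hfe : (1 - e) + e = 1 := sub_add_cancel 1 e
  have hP : JordanDerivableAtOrthogonal φ := hP
  have ha := hP.peirceDiagonalize_apply_left he hef h2B
  have hb := peirceDiagonalize_comm φ e (1 - e) ▸
    hP.peirceDiagonalize_apply_left he.one_sub hfe h2A
  set χ := peirceDiagonalize φ e (1 - e)
  have hχ : JordanDerivableAtOrthogonal χ := hP.add_mulLeft_sub_mulRight _
  have hψχ : ∀ U, ψ U = χ U - χ 1 * U := fun U => by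
    rw [hψ, peirceDiagonalize_apply, peirceDiagonalize_apply]
    noncomm_ring
  have hχmn := hχ.apply_mul_of_mem_offDiag he hef h2A h2B ha hb hm hn
  have hχnm := hχ.apply_mul_of_mem_offDiag he.one_sub hfe h2B h2A hb ha hn hm
  simp only [hψχ, map_add]
  refine ⟨?_, ?_, ?_, ?_⟩
  · linear_combination (norm := noncomm_ring) hχmn
  · linear_combination (norm := noncomm_ring) hχnm
  · linear_combination (norm := noncomm_ring) hχmn + hχnm
  · linear_combination (norm := noncomm_ring) hχmn + hχnm

theorem psi_jordan_on_offdiagonal_corners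
    {R : Type*} [Ring R] (e : R) (he : e * e = e)
    (h2A : ∀ x : R, e * x * e + e * x * e = 0 → e * x * e = 0)
    (h2B : ∀ x : R, (1 - e) * x * (1 - e) + (1 - e) * x * (1 - e) = 0 →
      (1 - e) * x * (1 - e) = 0)
    (hlf : ∀ a : R, a = e * a * e → (∀ x : R, a * (e * x * (1 - e)) = 0) → a = 0)
    (hrf : ∀ b : R, b = (1 - e) * b * (1 - e) → (∀ x : R, (e * x * (1 - e)) * b = 0) → b = 0)
    (φ : R →+ R)
    (hP : ∀ U V : R, U * V = 0 → V * U = 0 →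
      φ U * V + V * φ U + U * φ V + φ V * U = 0)
    (ψ : R → R)
    (hψ : ∀ U : R, ψ U = φ U - φ 1 * U +
      ((e * φ e * (1 - e) + (1 - e) * φ (1 - e) * e) * U -
        U * (e * φ e * (1 - e) + (1 - e) * φ (1 - e) * e))) :
    ∀ m n : R, m = e * m * (1 - e) → n = (1 - e) * n * e →
      (ψ (m * n) = ψ m * n + m * ψ n) ∧
      (ψ (n * m) = ψ n * m + n * ψ m) ∧
      (ψ (m * n + n * m) = (ψ m * n + n * ψ m) + (m * ψ n + ψ n * m)) ∧
      (ψ (n * m + m * n) = (ψ n * m + m * ψ n) + (n * ψ m + ψ m * n)) :=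
  psi_jordan_on_offdiagonal_corners_general e he h2A h2B φ hP ψ hψ
end
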